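/- Let a ≥ b ≥ 2 be integers and let G = K_a ∨ ((a−1)(b−1))K_b, on n = a + b(a−1)(b−1) vertices. Then every eigenvalue of G is an integer, and the energy of G equals the energy of the complete graph K_n: E(G) = 2(n − 1). -/

import Mathlib

open Polynomial

/-- The characteristic polynomial of the adjacency matrix of a finite simple graph. -/
noncomputable def graphCharpoly {V : Type} [Fintype V] (G : SimpleGraph V) : Polynomial ℝ :=
  letI := Classical.decEq V
  letI : DecidableRel G.Adj := Classical.decRel _
  (SimpleGraph.adjMatrix ℝ G).charpoly

/-- The multiplicity `m(lam)` of `lam` as an eigenvalue of `G`, i.e. its multiplicity as a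
root of the characteristic polynomial of the adjacency matrix of `G`. -/
noncomputable def eigMult {V : Type} [Fintype V] (G : SimpleGraph V) (lam : ℝ) : ℕ :=
  (graphCharpoly G).rootMultiplicity lam

/-- The energy of a graph: the sum of the absolute values of the eigenvalues of its
adjacency matrix, counted with multiplicity. -/
noncomputable def graphEnergy {V : Type} [Fintype V] (G : SimpleGraph V) : ℝ :=
  ((graphCharpoly G).roots.map (fun x => |x|)).sum

/-- The join of two graphs: the disjoint union together with all edges between the parts. -/
def joinG {V W : Type} (G : SimpleGraph V) (H : SimpleGraph W) : SimpleGraph (V ⊕ W) where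
  Adj x y := match x, y with
    | Sum.inl a, Sum.inl b => G.Adj a b
    | Sum.inr a, Sum.inr b => H.Adj a b
    | Sum.inl _, Sum.inr _ => True
    | Sum.inr _, Sum.inl _ => True
  symm := by
    constructor
    rintro (a | a) (c | c) h <;> simp_all [SimpleGraph.adj_comm]
  loopless := by
    constructor
    rintro (a | a) h
    · exact G.irrefl h
    · exact H.irrefl h

/-- `m` pairwise disjoint copies of `H` (no edges between distinct copies). -/
def disjCopies {V : Type} (m : ℕ) (H : SimpleGraph V) : SimpleGraph (Fin m × V) where
  Adj x y := x.1 = y.1 ∧ H.Adj x.2 y.2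
  symm := by
    constructor
    rintro ⟨i, x⟩ ⟨k, y⟩ ⟨h1, h2⟩
    exact ⟨h1.symm, h2.symm⟩
  loopless := by
    constructor
    rintro ⟨i, x⟩ ⟨_, h⟩
    exact H.irrefl h

/-!
With `α = x + 1`, the characteristic matrix `x • 1 - A` of `K_a ∨ m K_b` has diagonal blocks
`α • 1 - J` and `1 ⊗ (α • 1 - J)`, joined by `-J`, where `J` is the all-ones matrix. As `J`
has constant row sums, the Schur complement of the lower block is again of the form
`α • 1 - β • J`, whose determinant is `α ^ (k - 1) * (α - k * β)`. Hence, for `α ∉ {0, b}`,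
`det (x • 1 - A) = α ^ (a - 1 + m (b - 1)) (α - b) ^ (m - 1) ((α - a) (α - b) - a b m)`,
and this extends to an identity of polynomials. For `m = (a - 1)(b - 1)` the quadratic factor
splits as `(x - (a b - 1)) (x + (a - 1)(b - 1))`, so the spectrum consists of the integers
`a b - 1`, `-(a - 1)(b - 1)`, `b - 1` and `-1`, and adding up their absolute values gives
`2 (n - 1)`.
-/

open scoped Kronecker

namespace Matrix

variable {l m n o R : Type*}

def allOnes [One R] : Matrix m n R := of fun _ _ => 1

@[simp]
lemma allOnes_apply [One R] (i : m) (j : n) : (allOnes : Matrix m n R) i j = 1 := rfl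

lemma allOnes_mul_allOnes [NonAssocSemiring R] [Fintype m] :
    (allOnes : Matrix l m R) * (allOnes : Matrix m n R) = (Fintype.card m : R) • allOnes := by
  ext
  simp [mul_apply]

section Field

variable {K : Type*} [Field K]

lemma det_smul_one_sub_smul_allOnes [Fintype n] [DecidableEq n] [Nonempty n] {α : K}
    (hα : α ≠ 0) (β : K) :
    (α • (1 : Matrix n n K) - β • allOnes).det
      = α ^ (Fintype.card n - 1) * (α - Fintype.card n * β) := by
  have h : α • (1 : Matrix n n K) - β • allOnes
      = α • (1 + replicateCol Unit (fun _ : n => -(β / α)) * replicateRow Unit (1 : n → K)) := by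
    ext i j
    by_cases hij : i = j <;> simp [hij, mul_apply, replicateCol_apply, replicateRow_apply]
    · field_simp
      ring
    · field_simp
  obtain ⟨k, hk⟩ : ∃ k, Fintype.card n = k + 1 :=
    ⟨_, (Nat.succ_pred_eq_of_pos Fintype.card_pos).symm⟩
  rw [h, det_smul, det_one_add_replicateCol_mul_replicateRow]
  simp only [dotProduct, Pi.one_apply, one_mul, Finset.sum_const, Finset.card_univ,
    nsmul_eq_mul, hk, Nat.add_sub_cancel]
  push_cast
  field_simp
  ring

lemma one_kronecker_mul_allOnes [Fintype n] [DecidableEq o] [Fintype o] (F : Matrix n n K)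
    (c : K) (hF : F * (allOnes : Matrix n l K) = c • allOnes) :
    ((1 : Matrix o o K) ⊗ₖ F) * (allOnes : Matrix (o × n) l K) = c • allOnes := by
  ext ⟨i, u⟩ j
  have := congr_fun₂ hF u j
  simp only [mul_apply, allOnes_apply, mul_one, smul_apply] at this ⊢
  rw [Fintype.sum_prod_type]
  simp [one_apply, this]

lemma nonsing_inv_mul_eq_inv_smul [Fintype n] [DecidableEq n] {D : Matrix n n K}
    {B : Matrix n l K} {c : K} (hD : IsUnit D.det) (hc : c ≠ 0) (h : D * B = c • B) :
    D⁻¹ * B = c⁻¹ • B :=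
  calc D⁻¹ * B = D⁻¹ * (c⁻¹ • (D * B)) := by
        rw [h, smul_smul, inv_mul_cancel₀ hc, one_smul]
    _ = c⁻¹ • B := by rw [Matrix.mul_smul, nonsing_inv_mul_cancel_left _ _ hD]

lemma det_fromBlocks_allOnes_one_kronecker {p q r : Type*} [Fintype p] [Fintype q] [Fintype r]
    [DecidableEq p] [DecidableEq q] [DecidableEq r] [Nonempty p] [Nonempty q] [Nonempty r]
    {α : K} (hα : α ≠ 0) (hαr : α ≠ Fintype.card r) :
    (fromBlocks (α • 1 - allOnes) (-allOnes) (-allOnes)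
        ((1 : Matrix q q K) ⊗ₖ (α • (1 : Matrix r r K) - allOnes)) :
        Matrix (p ⊕ q × r) (p ⊕ q × r) K).det
      = α ^ (Fintype.card p - 1 + Fintype.card q * (Fintype.card r - 1))
        * (α - Fintype.card r) ^ (Fintype.card q - 1)
        * ((α - Fintype.card p) * (α - Fintype.card r)
          - Fintype.card p * Fintype.card q * Fintype.card r) := by
  set F : Matrix r r K := α • 1 - allOnes
  set D : Matrix (q × r) (q × r) K := 1 ⊗ₖ F
  have hαr' : α - Fintype.card r ≠ 0 := sub_ne_zero.mpr hαr
  have hFJ : F * (allOnes : Matrix r p K) = (α - Fintype.card r) • allOnes := by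
    simp only [F, Matrix.sub_mul, Matrix.smul_mul, Matrix.one_mul, allOnes_mul_allOnes, sub_smul]
  have hdetF : F.det = α ^ (Fintype.card r - 1) * (α - Fintype.card r) := by
    simpa [F] using det_smul_one_sub_smul_allOnes hα (1 : K)
  have hdetD : D.det = F.det ^ Fintype.card q := by simp [D, det_kronecker]
  have hD : IsUnit D.det := by
    rw [hdetD, hdetF]
    exact (mul_ne_zero (pow_ne_zero _ hα) hαr').isUnit.pow _
  let := D.invertibleOfIsUnitDet hD
  set J : Matrix (q × r) p K := allOnes
  have hDJ : D⁻¹ * J = (α - Fintype.card r)⁻¹ • J :=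
    nonsing_inv_mul_eq_inv_smul hD hαr' (one_kronecker_mul_allOnes F _ hFJ)
  have hschur : α • 1 - allOnes - (-allOnes : Matrix p (q × r) K) * ⅟D * (-J)
      = α • (1 : Matrix p p K)
        - (1 + (Fintype.card q * Fintype.card r : K) / (α - Fintype.card r)) • allOnes := by
    simp only [Matrix.mul_neg, Matrix.neg_mul, neg_neg]
    rw [invOf_eq_nonsing_inv, Matrix.mul_assoc, hDJ, Matrix.mul_smul,
      allOnes_mul_allOnes, Fintype.card_prod, smul_smul, add_smul, one_smul, ← sub_sub]
    congr 2
    push_cast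
    ring
  obtain ⟨k, hk⟩ : ∃ k, Fintype.card q = k + 1 :=
    ⟨_, (Nat.succ_pred_eq_of_pos Fintype.card_pos).symm⟩
  rw [det_fromBlocks₂₂, hschur, det_smul_one_sub_smul_allOnes hα, hdetD, hdetF, mul_pow,
    ← pow_mul, hk, Nat.add_sub_cancel, pow_add, mul_comm (Fintype.card r - 1), pow_succ (α - _)]
  push_cast
  field_simp
  ring

end Field

end Matrix

open Matrix

instance joinG.decRel {V W : Type} (G : SimpleGraph V) (H : SimpleGraph W)
    [DecidableRel G.Adj] [DecidableRel H.Adj] : DecidableRel (joinG G H).Adj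
  | Sum.inl a, Sum.inl b => inferInstanceAs (Decidable (G.Adj a b))
  | Sum.inr a, Sum.inr b => inferInstanceAs (Decidable (H.Adj a b))
  | Sum.inl _, Sum.inr _ => inferInstanceAs (Decidable True)
  | Sum.inr _, Sum.inl _ => inferInstanceAs (Decidable True)

instance disjCopies.decRel {V : Type} (m : ℕ) (H : SimpleGraph V) [DecidableEq V]
    [DecidableRel H.Adj] : DecidableRel (disjCopies m H).Adj := fun x y =>
  inferInstanceAs (Decidable (x.1 = y.1 ∧ H.Adj x.2 y.2))

lemma graphCharpoly_eq_charpoly_adjMatrix {V : Type} [Fintype V] [DecidableEq V]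
    (G : SimpleGraph V) [DecidableRel G.Adj] : graphCharpoly G = (G.adjMatrix ℝ).charpoly := by
  unfold graphCharpoly
  congr!

lemma graphCharpoly_ne_zero {V : Type} [Fintype V] (G : SimpleGraph V) :
    graphCharpoly G ≠ 0 := by
  classical
  exact graphCharpoly_eq_charpoly_adjMatrix G ▸ (charpoly_monic _).ne_zero

section AdjMatrix

variable {R : Type*}

lemma adjMatrix_joinG [Zero R] [One R] {V W : Type} (G : SimpleGraph V) (H : SimpleGraph W)
    [DecidableRel G.Adj] [DecidableRel H.Adj] :
    (joinG G H).adjMatrix R = fromBlocks (G.adjMatrix R) allOnes allOnes (H.adjMatrix R) := by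
  ext (i | i) (j | j) <;> rfl

lemma adjMatrix_disjCopies [MulZeroOneClass R] {V : Type} [DecidableEq V] (m : ℕ)
    (H : SimpleGraph V) [DecidableRel H.Adj] :
    (disjCopies m H).adjMatrix R = (1 : Matrix (Fin m) (Fin m) R) ⊗ₖ H.adjMatrix R := by
  ext ⟨i, u⟩ ⟨j, v⟩
  rw [SimpleGraph.adjMatrix_apply]
  by_cases hij : i = j <;> simp [disjCopies, one_apply, hij]

lemma adjMatrix_top_eq_allOnes_sub_one [Ring R] {V : Type} [DecidableEq V] :
    (⊤ : SimpleGraph V).adjMatrix R = allOnes - 1 := by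
  ext i j
  by_cases hij : i = j <;> simp [one_apply, hij]

end AdjMatrix

lemma scalar_sub_adjMatrix_joinG_top_disjCopies_top {R : Type*} [CommRing R] (a b m : ℕ) (x : R) :
    scalar _ x
        - (joinG (⊤ : SimpleGraph (Fin a)) (disjCopies m (⊤ : SimpleGraph (Fin b)))).adjMatrix R
      = fromBlocks ((x + 1) • 1 - allOnes) (-allOnes) (-allOnes)
          ((1 : Matrix (Fin m) (Fin m) R) ⊗ₖ ((x + 1) • 1 - allOnes)) := by
  rw [adjMatrix_joinG, adjMatrix_disjCopies, adjMatrix_top_eq_allOnes_sub_one,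
    adjMatrix_top_eq_allOnes_sub_one]
  ext (i | ⟨k, u⟩) (j | ⟨l, v⟩)
  all_goals
    simp only [Matrix.sub_apply, scalar_apply, diagonal_apply, one_apply, Matrix.smul_apply,
      Matrix.neg_apply, fromBlocks_apply₁₁, fromBlocks_apply₁₂, fromBlocks_apply₂₁,
      fromBlocks_apply₂₂, kroneckerMap_apply, allOnes_apply]
    split_ifs <;> simp_all

lemma graphCharpoly_joinG_top_disjCopies_top {a b m : ℕ} (ha : 0 < a) (hb : 0 < b) (hm : 0 < m) :
    graphCharpoly (joinG (⊤ : SimpleGraph (Fin a)) (disjCopies m (⊤ : SimpleGraph (Fin b))))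
      = (X + 1) ^ (a - 1 + m * (b - 1)) * (X + 1 - (b : ℝ[X])) ^ (m - 1)
        * ((X + 1 - (a : ℝ[X])) * (X + 1 - (b : ℝ[X])) - (a * m * b : ℝ[X])) := by
  have := Fin.pos_iff_nonempty.mp ha
  have := Fin.pos_iff_nonempty.mp hb
  have := Fin.pos_iff_nonempty.mp hm
  rw [graphCharpoly_eq_charpoly_adjMatrix]
  refine eq_of_infinite_eval_eq _ _ (Set.Infinite.mono (s := {-1, (b : ℝ) - 1}ᶜ) ?_
    (Set.toFinite _).infinite_compl)
  intro x hx
  simp only [Set.mem_compl_iff, Set.mem_insert_iff, Set.mem_singleton_iff, not_or] at hx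
  have hx₁ : x + 1 ≠ 0 := fun h => hx.1 (by linear_combination h)
  have hx₂ : x + 1 ≠ (b : ℝ) := fun h => hx.2 (by linear_combination h)
  rw [Set.mem_ofPred_eq, eval_charpoly, scalar_sub_adjMatrix_joinG_top_disjCopies_top,
    det_fromBlocks_allOnes_one_kronecker hx₁ (by simpa using hx₂)]
  simp only [Fintype.card_fin, eval_mul, eval_pow, eval_sub, eval_add, eval_X, eval_one,
    eval_natCast]

def joinSpectrum (a b : ℕ) : Multiset ℤ :=
  {(a : ℤ) * b - 1, -(((a : ℤ) - 1) * ((b : ℤ) - 1))}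
    + Multiset.replicate ((a - 1) * (b - 1) - 1) ((b : ℤ) - 1)
    + Multiset.replicate (a - 1 + (a - 1) * (b - 1) * (b - 1)) (-1)

lemma graphCharpoly_joinG_top_disjCopies_top_eq_prod {a b : ℕ} (ha : 2 ≤ a) (hb : 2 ≤ b) :
    graphCharpoly (joinG (⊤ : SimpleGraph (Fin a))
        (disjCopies ((a - 1) * (b - 1)) (⊤ : SimpleGraph (Fin b))))
      = (((joinSpectrum a b).map ((↑) : ℤ → ℝ)).map fun x => X - C x).prod := by
  rw [graphCharpoly_joinG_top_disjCopies_top (by omega) (by omega)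
    (Nat.mul_pos (by omega) (by omega))]
  simp only [joinSpectrum, Multiset.map_add, Multiset.prod_add, Multiset.map_replicate,
    Multiset.prod_replicate, Multiset.insert_eq_cons, Multiset.map_cons, Multiset.prod_cons,
    Multiset.map_singleton, Multiset.prod_singleton, Int.cast_sub, Int.cast_neg, Int.cast_mul,
    Int.cast_natCast, Int.cast_one, map_sub, map_neg, map_mul, map_natCast, map_one]
  push_cast [Nat.cast_sub (by omega : 1 ≤ a), Nat.cast_sub (by omega : 1 ≤ b)]
  ring

lemma roots_graphCharpoly_joinG_top_disjCopies_top {a b : ℕ} (ha : 2 ≤ a) (hb : 2 ≤ b) :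
    (graphCharpoly (joinG (⊤ : SimpleGraph (Fin a))
        (disjCopies ((a - 1) * (b - 1)) (⊤ : SimpleGraph (Fin b))))).roots
      = (joinSpectrum a b).map (↑) := by
  rw [graphCharpoly_joinG_top_disjCopies_top_eq_prod ha hb, roots_multiset_prod_X_sub_C]

lemma sum_map_abs_joinSpectrum {a b : ℕ} (ha : 2 ≤ a) (hb : 2 ≤ b) :
    ((joinSpectrum a b).map abs).sum = 2 * (((a + b * ((a - 1) * (b - 1)) : ℕ) : ℤ) - 1) := by
  have ha' : (2 : ℤ) ≤ a := by exact_mod_cast ha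
  have hb' : (2 : ℤ) ≤ b := by exact_mod_cast hb
  simp only [joinSpectrum, Multiset.insert_eq_cons, Multiset.map_add, Multiset.map_cons,
    Multiset.map_singleton, Multiset.map_replicate, Multiset.sum_add, Multiset.sum_cons,
    Multiset.sum_singleton, Multiset.sum_replicate, nsmul_eq_mul, abs_neg, abs_one,
    abs_of_nonneg (by nlinarith : (0 : ℤ) ≤ a * b - 1),
    abs_of_nonneg (by nlinarith : (0 : ℤ) ≤ (a - 1) * (b - 1)),
    abs_of_nonneg (by linarith : (0 : ℤ) ≤ b - 1)]
  push_cast [Nat.cast_sub (by omega : 1 ≤ a), Nat.cast_sub (by omega : 1 ≤ b),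
    Nat.cast_sub (Nat.mul_pos (by omega) (by omega) : 1 ≤ (a - 1) * (b - 1))]
  ring

/-- Let `a ≥ b ≥ 2` and let `G = K_a ∨ ((a-1)(b-1)) K_b` be the join of the complete graph
`K_a` with the disjoint union of `(a-1)(b-1)` copies of `K_b`, on
`n = a + b (a-1)(b-1)` vertices.  Then every eigenvalue of `G` is an integer, and `G` is
borderenergetic: its energy equals the energy of the complete graph `K_n`, namely
`E(G) = 2(n - 1)`. -/
theorem integral_borderenergetic_join_Ka_copies_Kb (a b : ℕ) (hb : 2 ≤ b) (hab : b ≤ a) :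
    (∀ lam : ℝ,
        (graphCharpoly (joinG (⊤ : SimpleGraph (Fin a))
            (disjCopies ((a - 1) * (b - 1)) (⊤ : SimpleGraph (Fin b))))).IsRoot lam →
        ∃ z : ℤ, lam = z) ∧
      graphEnergy (joinG (⊤ : SimpleGraph (Fin a))
          (disjCopies ((a - 1) * (b - 1)) (⊤ : SimpleGraph (Fin b))))
        = 2 * (((a + b * ((a - 1) * (b - 1)) : ℕ) : ℝ) - 1) := by
  have hroots := roots_graphCharpoly_joinG_top_disjCopies_top (hb.trans hab) hb
  refine ⟨fun lam hlam => ?_, ?_⟩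
  · have hmem := (mem_roots (graphCharpoly_ne_zero _)).mpr hlam
    rw [hroots, Multiset.mem_map] at hmem
    obtain ⟨z, -, rfl⟩ := hmem
    exact ⟨z, rfl⟩
  · calc graphEnergy _ = (((joinSpectrum a b).map abs).sum : ℝ) := by
          rw [graphEnergy, hroots, Int.cast_multiset_sum, Multiset.map_map, Multiset.map_map]
          simp only [Function.comp_def, Int.cast_abs]
      _ = _ := by
          rw [sum_map_abs_joinSpectrum (hb.trans hab) hb]
          push_cast
          ring
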